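/- For every l ≥ 2, the map ξ_{l+1} : ℤ^{2l+4} → ℤ/Nℤ ⊕ ℤ ⊕ ℤ defined by ξ_{l+1}(z) = (z₁ mod N, z₂ - z_{2l+3} + z_{2l+4}, z₃ + z₄ + ⋯ + z_{l+2} + z_{2l+3}) is a surjective group homomorphism with kernel B_{l,l+1} ℤ^{2l+2}, and hence induces a group isomorphism ℤ^{2l+4} / B_{l,l+1} ℤ^{2l+2} ≅ ℤ/Nℤ ⊕ ℤ ⊕ ℤ. -/
import Mathlib

/-- The entry in row `i`, column `j` (1-based) of the `(2l+4) × (2l+2)` integer matrix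
`B_{l,l+1}` (for the reversed reset one-counter shift). -/
def Bent (N l : ℕ) (i j : ℕ) : ℤ :=
  if i = 1 ∧ j = l + 2 then (N : ℤ)
  else if i = j ∧ 2 ≤ i ∧ i ≤ 2 * l + 2 ∧ i ≠ l + 2 then 1
  else if i = 2 * l + 4 ∧ j = 1 then 1
  else if i = 2 * l + 3 ∧ j = 2 then 1
  else if i = j + 1 ∧ 2 ≤ i ∧ i ≤ l + 2 then -1
  else 0

/-- The matrix `B_{l,l+1}`, with explicitly given size `m × n`. -/
def Bmat (N l m n : ℕ) : Matrix (Fin m) (Fin n) ℤ :=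
  Matrix.of fun i j => Bent N l (i.1 + 1) (j.1 + 1)

/-- The map `ξ_{l+1} : ℤ^{2l+4} → ℤ/Nℤ ⊕ ℤ ⊕ ℤ`,
`z ↦ (z₁ mod N, z₂ - z_{2l+3} + z_{2l+4}, z₃ + ⋯ + z_{l+2} + z_{2l+3})`. -/
def xi (N l : ℕ) (z : Fin (2 * l + 4) → ℤ) : ZMod N × ℤ × ℤ :=
  (((z ⟨0, by omega⟩ : ℤ) : ZMod N),
    z ⟨1, by omega⟩ - z ⟨2 * l + 2, by omega⟩ + z ⟨2 * l + 3, by omega⟩,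
    (∑ k : Fin l, z ⟨k.1 + 2, by have := k.isLt; omega⟩) + z ⟨2 * l + 2, by omega⟩)

section aux

variable (N l : ℕ)

lemma mulVec_apply (x : Fin (2 * l + 2) → ℤ) (i : Fin (2 * l + 4)) :
    (Bmat N l (2 * l + 4) (2 * l + 2)).mulVec x i
      = ∑ j : Fin (2 * l + 2), Bent N l (i.1 + 1) (j.1 + 1) * x j := rfl

lemma row0 (x : Fin (2 * l + 2) → ℤ) (i : Fin (2 * l + 4)) (hi : i.1 = 0) :
    (Bmat N l (2 * l + 4) (2 * l + 2)).mulVec x i = (N : ℤ) * x ⟨l + 1, by omega⟩ := by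
  rw [mulVec_apply]
  rw [Finset.sum_eq_single (⟨l + 1, by omega⟩ : Fin (2 * l + 2))]
  · have : Bent N l (i.1 + 1) (l + 1 + 1) = (N : ℤ) := by
      unfold Bent; split_ifs <;> omega
    rw [this]
  · intro b _ hb
    have hb' : b.1 ≠ l + 1 := fun h => hb (Fin.ext h)
    have hb2 := b.2
    have : Bent N l (i.1 + 1) (b.1 + 1) = 0 := by
      unfold Bent; split_ifs <;> omega
    rw [this, zero_mul]
  · simp

lemma row_mid (hl : 2 ≤ l) (x : Fin (2 * l + 2) → ℤ) (i : Fin (2 * l + 4))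
    (h1 : 1 ≤ i.1) (h2 : i.1 ≤ l) :
    (Bmat N l (2 * l + 4) (2 * l + 2)).mulVec x i
      = x ⟨i.1, by omega⟩ - x ⟨i.1 - 1, by omega⟩ := by
  rw [mulVec_apply]
  rw [Finset.sum_eq_add_of_mem (⟨i.1, by omega⟩ : Fin (2 * l + 2)) ⟨i.1 - 1, by omega⟩
      (Finset.mem_univ _) (Finset.mem_univ _) (by simp only [ne_eq, Fin.mk.injEq]; omega)
      (by
        intro c _ hc
        have hc1 : c.1 ≠ i.1 := fun h => hc.1 (Fin.ext h)
        have hc2 : c.1 ≠ i.1 - 1 := fun h => hc.2 (Fin.ext h)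
        have hcb := c.2
        have : Bent N l (i.1 + 1) (c.1 + 1) = 0 := by
          unfold Bent; split_ifs <;> omega
        rw [this, zero_mul])]
  have e1 : Bent N l (i.1 + 1) (i.1 + 1) = 1 := by
    unfold Bent; split_ifs <;> omega
  have e2 : Bent N l (i.1 + 1) (i.1 - 1 + 1) = -1 := by
    unfold Bent; split_ifs <;> omega
  rw [e1, e2]; ring

lemma row_lp1 (x : Fin (2 * l + 2) → ℤ) (i : Fin (2 * l + 4)) (hi : i.1 = l + 1) :
    (Bmat N l (2 * l + 4) (2 * l + 2)).mulVec x i = - x ⟨l, by omega⟩ := by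
  rw [mulVec_apply]
  rw [Finset.sum_eq_single (⟨l, by omega⟩ : Fin (2 * l + 2))]
  · have : Bent N l (i.1 + 1) (l + 1) = -1 := by
      unfold Bent; split_ifs <;> omega
    rw [this]; ring
  · intro b _ hb
    have hb' : b.1 ≠ l := fun h => hb (Fin.ext h)
    have hb2 := b.2
    have : Bent N l (i.1 + 1) (b.1 + 1) = 0 := by
      unfold Bent; split_ifs <;> omega
    rw [this, zero_mul]
  · simp

lemma row_diag (x : Fin (2 * l + 2) → ℤ) (i : Fin (2 * l + 4))
    (h1 : l + 2 ≤ i.1) (h2 : i.1 ≤ 2 * l + 1) :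
    (Bmat N l (2 * l + 4) (2 * l + 2)).mulVec x i = x ⟨i.1, by omega⟩ := by
  rw [mulVec_apply]
  rw [Finset.sum_eq_single (⟨i.1, by omega⟩ : Fin (2 * l + 2))]
  · have : Bent N l (i.1 + 1) (i.1 + 1) = 1 := by
      unfold Bent; split_ifs <;> omega
    rw [this, one_mul]
  · intro b _ hb
    have hb' : b.1 ≠ i.1 := fun h => hb (Fin.ext h)
    have hb2 := b.2
    have : Bent N l (i.1 + 1) (b.1 + 1) = 0 := by
      unfold Bent; split_ifs <;> omega
    rw [this, zero_mul]
  · simp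

lemma row_2lp2 (x : Fin (2 * l + 2) → ℤ) (i : Fin (2 * l + 4)) (hi : i.1 = 2 * l + 2) :
    (Bmat N l (2 * l + 4) (2 * l + 2)).mulVec x i = x ⟨1, by omega⟩ := by
  rw [mulVec_apply]
  rw [Finset.sum_eq_single (⟨1, by omega⟩ : Fin (2 * l + 2))]
  · have : Bent N l (i.1 + 1) (1 + 1) = 1 := by
      unfold Bent; split_ifs <;> omega
    rw [this, one_mul]
  · intro b _ hb
    have hb' : b.1 ≠ 1 := fun h => hb (Fin.ext h)
    have hb2 := b.2
    have : Bent N l (i.1 + 1) (b.1 + 1) = 0 := by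
      unfold Bent; split_ifs <;> omega
    rw [this, zero_mul]
  · simp

lemma row_2lp3 (x : Fin (2 * l + 2) → ℤ) (i : Fin (2 * l + 4)) (hi : i.1 = 2 * l + 3) :
    (Bmat N l (2 * l + 4) (2 * l + 2)).mulVec x i = x ⟨0, by omega⟩ := by
  rw [mulVec_apply]
  rw [Finset.sum_eq_single (⟨0, by omega⟩ : Fin (2 * l + 2))]
  · have : Bent N l (i.1 + 1) (0 + 1) = 1 := by
      unfold Bent; split_ifs <;> omega
    rw [this, one_mul]
  · intro b _ hb
    have hb' : b.1 ≠ 0 := fun h => hb (Fin.ext h)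
    have hb2 := b.2
    have : Bent N l (i.1 + 1) (b.1 + 1) = 0 := by
      unfold Bent; split_ifs <;> omega
    rw [this, zero_mul]
  · simp

end aux

set_option maxHeartbeats 1600000 in
/-- Lemma 5.6: `ξ_{l+1}` is an additive surjection with kernel `B_{l,l+1} ℤ^{2l+2}`, and hence
induces an isomorphism `ℤ^{2l+4} / B_{l,l+1} ℤ^{2l+2} ≅ ℤ/Nℤ ⊕ ℤ ⊕ ℤ`. -/
theorem stmt8 (N l : ℕ) (hN : 0 < N) (hl : 2 ≤ l) :
    (∀ z w : Fin (2 * l + 4) → ℤ, xi N l (z + w) = xi N l z + xi N l w) ∧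
    Function.Surjective (xi N l) ∧
    (∀ z : Fin (2 * l + 4) → ℤ,
      xi N l z = 0 ↔ ∃ x : Fin (2 * l + 2) → ℤ, z = (Bmat N l (2 * l + 4) (2 * l + 2)).mulVec x) ∧
    Nonempty
      (((Fin (2 * l + 4) → ℤ) ⧸
          LinearMap.range (Bmat N l (2 * l + 4) (2 * l + 2)).mulVecLin) ≃+
        (ZMod N × ℤ × ℤ)) := by
  haveI : NeZero N := ⟨hN.ne'⟩
  have hadd : ∀ z w : Fin (2 * l + 4) → ℤ, xi N l (z + w) = xi N l z + xi N l w := by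
    intro z w
    simp only [xi, Pi.add_apply, Prod.mk_add_mk, Prod.mk.injEq, Finset.sum_add_distrib]
    refine ⟨by push_cast; ring, by ring, by ring⟩
  have hsurj : Function.Surjective (xi N l) := by
    rintro ⟨a, b, c⟩
    refine ⟨fun i => if i.1 = 0 then (a.val : ℤ) else if i.1 = 1 then b
      else if i.1 = 2 then c else 0, ?_⟩
    simp only [xi]
    refine Prod.ext ?_ (Prod.ext ?_ ?_)
    · simp [Fin.val_mk, ZMod.natCast_val, ZMod.cast_id]
    · simp only [Fin.val_mk]
      split_ifs <;> first | omega | simp_all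
    · simp only [Fin.val_mk]
      rw [Fin.sum_univ_eq_sum_range (fun t => if (t + 2 : ℕ) = 0 then (a.val : ℤ)
        else if t + 2 = 1 then b else if t + 2 = 2 then c else 0) l]
      have hc : ∀ k ∈ Finset.range l, (if (k + 2 : ℕ) = 0 then (a.val : ℤ)
          else if k + 2 = 1 then b else if k + 2 = 2 then c else 0)
          = if k = 0 then c else 0 := by
        intro k _
        split_ifs <;> first | omega | simp_all
      rw [Finset.sum_congr rfl hc, Finset.sum_ite_eq' (Finset.range l) 0]
      rw [if_pos (by simp; omega)]
      split_ifs <;> first | omega | simp_all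
  have hker : ∀ z : Fin (2 * l + 4) → ℤ,
      xi N l z = 0 ↔ ∃ x : Fin (2 * l + 2) → ℤ,
        z = (Bmat N l (2 * l + 4) (2 * l + 2)).mulVec x := by
    intro z
    constructor
    · intro hz
      rw [xi, Prod.ext_iff, Prod.ext_iff] at hz
      obtain ⟨h1, h2, h3⟩ := hz
      simp only [Prod.fst_zero, Prod.snd_zero] at h1 h2 h3
      obtain ⟨z', hz'eq⟩ : ∃ z' : ℕ → ℤ, ∀ t (h : t < 2 * l + 4), z' t = z ⟨t, h⟩ :=
        ⟨fun t => if h : t < 2 * l + 4 then z ⟨t, h⟩ else 0, fun t h => dif_pos h⟩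
      have hsum : ∑ t ∈ Finset.Icc 2 (l + 1), z' t = - z' (2 * l + 2) := by
        have hh : (∑ k : Fin l, z ⟨k.1 + 2, by have := k.isLt; omega⟩)
            = ∑ k ∈ Finset.range l, z' (k + 2) := by
          rw [← Fin.sum_univ_eq_sum_range (fun k => z' (k + 2)) l]
          exact Finset.sum_congr rfl fun k _ => (hz'eq _ _).symm
        rw [hh] at h3
        rw [show Finset.Icc 2 (l + 1) = Finset.Ico 2 (l + 2) from (Finset.Ico_add_one_right_eq_Icc _ _).symm,
          Finset.sum_Ico_eq_sum_range]
        rw [Finset.sum_congr rfl fun k _ => by rw [Nat.add_comm 2 k]]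
        rw [show l + 2 - 2 = l from by omega]
        rw [hz'eq (2 * l + 2) (by omega)]
        linarith [h3]
      have hdvd : (N : ℤ) ∣ z' 0 := by
        rw [hz'eq 0 (by omega)]
        exact (ZMod.intCast_zmod_eq_zero_iff_dvd _ _).mp h1
      obtain ⟨x, hx0, hxj, hxl1, hxd⟩ :
          ∃ x : Fin (2 * l + 2) → ℤ,
            (∀ (h : (0:ℕ) < 2 * l + 2), x ⟨0, h⟩ = z' (2 * l + 3)) ∧
            (∀ (j : ℕ) (h0 : 1 ≤ j) (h : j ≤ l) (hh : j < 2 * l + 2),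
              x ⟨j, hh⟩ = z' (2 * l + 2) + ∑ t ∈ Finset.Icc 2 j, z' t) ∧
            (∀ (h : l + 1 < 2 * l + 2), x ⟨l + 1, h⟩ = z' 0 / N) ∧
            (∀ (j : ℕ) (h0 : l + 2 ≤ j) (hh : j < 2 * l + 2), x ⟨j, hh⟩ = z' j) := by
        refine ⟨fun j => if j.1 = 0 then z' (2 * l + 3)
          else if j.1 ≤ l then z' (2 * l + 2) + ∑ t ∈ Finset.Icc 2 j.1, z' t
          else if j.1 = l + 1 then z' 0 / N
          else z' j.1, ?_, ?_, ?_, ?_⟩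
        · intro h; simp
        · intro j h0 h hh
          simp only [Fin.val_mk]
          rw [if_neg (by omega), if_pos h]
        · intro h
          simp only [Fin.val_mk]
          rw [if_neg (by omega), if_neg (by omega)]
          simp
        · intro j h0 hh
          simp only [Fin.val_mk]
          rw [if_neg (by omega), if_neg (by omega), if_neg (by omega)]
      refine ⟨x, ?_⟩
      funext i
      have hzi : z i = z' i.1 := (hz'eq i.1 i.2).symm
      have e2' : z' 1 - z' (2 * l + 2) + z' (2 * l + 3) = 0 := by
        rw [hz'eq 1 (by omega), hz'eq (2 * l + 2) (by omega), hz'eq (2 * l + 3) (by omega)]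
        exact h2
      rcases Nat.lt_or_ge i.1 1 with hi | hi
      · have hi0 : i.1 = 0 := by omega
        rw [row0 N l x i hi0, hxl1, Int.mul_ediv_cancel' hdvd, hzi, hi0]
      · rcases Nat.lt_or_ge i.1 (l + 1) with hi2 | hi2
        · -- rows 2..l+1 (1-based), i.1 in [1,l]
          rw [row_mid N l hl x i hi (by omega)]
          rcases Nat.lt_or_ge i.1 2 with hi3 | hi3
          · have hi1 : i.1 = 1 := by omega
            rw [hxj i.1 hi (by omega) (by omega)]
            have hb : x ⟨i.1 - 1, by omega⟩ = z' (2 * l + 3) := by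
              have he : (⟨i.1 - 1, by omega⟩ : Fin (2 * l + 2)) = ⟨0, by omega⟩ :=
                Fin.ext (show i.1 - 1 = 0 by omega)
              rw [he, hx0]
            rw [hb]
            rw [show Finset.Icc 2 i.1 = ∅ from Finset.Icc_eq_empty (by omega),
              Finset.sum_empty, hzi, hi1]
            linarith [e2']
          · rw [hxj i.1 hi (by omega) (by omega), hxj (i.1 - 1) (by omega) (by omega) (by omega)]
            obtain ⟨m, hm⟩ : ∃ m, i.1 = m + 1 := ⟨i.1 - 1, by omega⟩
            rw [hm, show m + 1 - 1 = m from by omega,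
              Finset.sum_Icc_succ_top (by omega : 2 ≤ m + 1), hzi, hm]
            ring
        · rcases Nat.lt_or_ge i.1 (l + 2) with hi3 | hi3
          · -- row l+2 (1-based), i.1 = l+1
            have hil : i.1 = l + 1 := by omega
            rw [row_lp1 N l x i hil, hxj l (by omega) le_rfl (by omega)]
            have hs : ∑ t ∈ Finset.Icc 2 (l + 1), z' t
                = ∑ t ∈ Finset.Icc 2 l, z' t + z' (l + 1) :=
              Finset.sum_Icc_succ_top (by omega) _
            rw [hzi, hil]
            rw [hs] at hsum
            linarith [hsum]
          · rcases Nat.lt_or_ge i.1 (2 * l + 2) with hi4 | hi4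
            · rw [row_diag N l x i hi3 (by omega), hxd i.1 hi3 (by omega), hzi]
            · rcases Nat.lt_or_ge i.1 (2 * l + 3) with hi5 | hi5
              · have hi22 : i.1 = 2 * l + 2 := by omega
                rw [row_2lp2 N l x i hi22, hxj 1 le_rfl (by omega) (by omega),
                  show Finset.Icc 2 1 = ∅ from Finset.Icc_eq_empty (by omega),
                  Finset.sum_empty, hzi, hi22]
                ring
              · have hi23 : i.1 = 2 * l + 3 := by omega
                rw [row_2lp3 N l x i hi23, hx0, hzi, hi23]
    · rintro ⟨x, rfl⟩
      rw [xi, Prod.ext_iff, Prod.ext_iff]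
      simp only [Prod.fst_zero, Prod.snd_zero]
      refine ⟨?_, ?_, ?_⟩
      · rw [row0 N l x _ rfl]
        push_cast
        simp
      · have hA : (Bmat N l (2 * l + 4) (2 * l + 2)).mulVec x ⟨1, by omega⟩
            = x ⟨1, by omega⟩ - x ⟨0, by omega⟩ :=
          (row_mid N l hl x ⟨1, by omega⟩ (le_refl 1) (show (1:ℕ) ≤ l by omega)).trans rfl
        have hB : (Bmat N l (2 * l + 4) (2 * l + 2)).mulVec x ⟨2 * l + 2, by omega⟩
            = x ⟨1, by omega⟩ := row_2lp2 N l x ⟨2 * l + 2, by omega⟩ rfl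
        have hC : (Bmat N l (2 * l + 4) (2 * l + 2)).mulVec x ⟨2 * l + 3, by omega⟩
            = x ⟨0, by omega⟩ := row_2lp3 N l x ⟨2 * l + 3, by omega⟩ rfl
        rw [hA, hB, hC]
        ring
      · obtain ⟨x', hx'eq⟩ : ∃ x' : ℕ → ℤ, ∀ t (h : t < 2 * l + 2), x' t = x ⟨t, h⟩ :=
          ⟨fun t => if h : t < 2 * l + 2 then x ⟨t, h⟩ else 0, fun t h => dif_pos h⟩
        obtain ⟨g, hg1, hg2⟩ : ∃ g : ℕ → ℤ,
            (∀ t, t ≤ l → g t = x' t) ∧ (∀ t, l < t → g t = 0) :=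
          ⟨fun t => if t ≤ l then x' t else 0, fun t h => if_pos h,
            fun t h => if_neg (by omega)⟩
        have hterm : ∀ k : Fin l,
            (Bmat N l (2 * l + 4) (2 * l + 2)).mulVec x
              ⟨k.1 + 2, by have := k.isLt; omega⟩ = g (k.1 + 2) - g (k.1 + 1) := by
          intro k
          have hk := k.isLt
          rcases Nat.lt_or_ge (k.1 + 2) (l + 1) with hkl | hkl
          · rw [row_mid N l hl x ⟨k.1 + 2, by omega⟩ (show (1:ℕ) ≤ k.1 + 2 by omega)
              (show k.1 + 2 ≤ l by omega),
              hg1 (k.1 + 2) (by omega), hg1 (k.1 + 1) (by omega),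
              hx'eq (k.1 + 2) (by omega), hx'eq (k.1 + 1) (by omega)]
            exact rfl
          · rw [row_lp1 N l x ⟨k.1 + 2, by omega⟩ (show k.1 + 2 = l + 1 by omega),
              hg2 (k.1 + 2) (by omega), hg1 (k.1 + 1) (by omega),
              hx'eq (k.1 + 1) (by omega),
              show (⟨k.1 + 1, by omega⟩ : Fin (2 * l + 2)) = ⟨l, by omega⟩ from
                Fin.ext (show k.1 + 1 = l by omega)]
            ring
        rw [Finset.sum_congr rfl fun k _ => hterm k]
        rw [Fin.sum_univ_eq_sum_range (fun k => g (k + 2) - g (k + 1)) l]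
        have htel : ∑ k ∈ Finset.range l, (g (k + 2) - g (k + 1))
            = g (l + 1) - g 1 := by
          have := Finset.sum_range_sub (fun t => g (t + 1)) l
          simpa using this
        rw [htel, row_2lp2 N l x ⟨2 * l + 2, by omega⟩ rfl,
          hg2 (l + 1) (by omega), hg1 1 (by omega), hx'eq 1 (by omega)]
        ring
  refine ⟨hadd, hsurj, hker, ?_⟩
  let φ : (Fin (2 * l + 4) → ℤ) →+ ZMod N × ℤ × ℤ := AddMonoidHom.mk' (xi N l) hadd
  have hkeq : LinearMap.range (Bmat N l (2 * l + 4) (2 * l + 2)).mulVecLin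
      = LinearMap.ker φ.toIntLinearMap := by
    ext z
    rw [LinearMap.mem_range, LinearMap.mem_ker]
    constructor
    · rintro ⟨x, rfl⟩
      exact (hker _).mpr ⟨x, rfl⟩
    · intro h
      obtain ⟨x, hx⟩ := (hker z).mp h
      exact ⟨x, hx.symm⟩
  rw [hkeq]
  exact ⟨(φ.toIntLinearMap.quotKerEquivOfSurjective hsurj).toAddEquiv⟩
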